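/- On the Banach module D₁(𝒲_n) = R⁺₁ ⊗̂ O(𝒲_n) with the P_m-action given by (u,v)·A(T) = e^{−vj}(1+T)^u A((1+T)^{e^v}−1), the derivations ∂_{m,1} = lim_{n→∞}(γ₁^{p^n}−1)/p^n and ∂_{m,2} = lim_{n→∞}(γ₂^{p^n}−1)/p^n (where γ₁ = (p^m,0), γ₂ = (0,p^m)) are given on monomials by ∂_{m,1}(T^i) = p^m·T^i·log(1+T) and ∂_{m,2}(T^i) = p^m·(i(1+T)T^{i−1}log(1+T) − j·T^i). -/

import Mathlib

open PowerSeries Filter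

/-- `log(1+T) = Σ_{k≥1} (-1)^{k+1} T^k / k` as a power series over `ℚ_p`. -/
noncomputable def log1p (p : ℕ) [Fact p.Prime] : PowerSeries ℚ_[p] :=
  PowerSeries.mk fun n => if n = 0 then 0 else (-1) ^ (n + 1) / (n : ℚ_[p])

/-- The binomial series `(1+T)^z = Σ_n C(z,n) Tⁿ` for `z ∈ ℚ_p`. -/
noncomputable def binomSeries (p : ℕ) [Fact p.Prime] (z : ℚ_[p]) : PowerSeries ℚ_[p] :=
  PowerSeries.mk fun n => (∏ t ∈ Finset.range n, (z - (t : ℚ_[p]))) / (n.factorial : ℚ_[p])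

/-!
Both limits are derivatives at `0` read off along the sequence `p^(m+N) = p^m p^N`: if `f` has
derivative `f'` at `0`, then `(f (p^m p^N) - f 0) / p^N → f' p^m`. Coefficientwise, `z ↦ (1+T)^z`
has derivative `(1+T)^z log(1+T)`; the exponent law `(1+T)^(z+w) = (1+T)^z (1+T)^w` reduces this to
`z = 0`, where the coefficients `C(z,k)` are polynomials in `z`. The `p`-adic exponential has
derivative `1` at `0` because `v_p(k!) ≤ k` gives its series a positive radius of convergence. The
two formulas are then the product and chain rules applied to `(1+T)^x T^i` and
`e^{-jx} ((1+T)^{e^x} - 1)^i` at `x = 0`.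
-/

open Asymptotics Topology

section SequentialDerivative

variable {𝕜 : Type*} [NontriviallyNormedField 𝕜]

theorem HasDerivAt.tendsto_sub_div {ι : Type*} {l : Filter ι} {f : 𝕜 → 𝕜} {f' x a : 𝕜}
    {z ε : ι → 𝕜} (hf : HasDerivAt f f' x) (hz : Tendsto z l (𝓝 x))
    (ha : Tendsto (fun k => (z k - x) / ε k) l (𝓝 a)) :
    Tendsto (fun k => (f (z k) - f x) / ε k) l (𝓝 (f' * a)) := by
  have hrem : (fun k => (f (z k) - f x - (z k - x) * f') / ε k) =o[l] fun _ => (1 : 𝕜) := by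
    simp only [div_eq_mul_inv]
    refine (((hasDerivAt_iff_isLittleO.mp hf).comp_tendsto hz).mul_isBigO
      (isBigO_refl (fun k => (ε k)⁻¹) l)).trans_isBigO ?_
    exact (ha.isBigO_one 𝕜).congr_left fun k => by simp [div_eq_mul_inv]
  have hsum := (ha.mul_const f').add (isLittleO_one_iff 𝕜 |>.mp hrem)
  rw [mul_comm, add_zero] at hsum
  refine hsum.congr fun k => ?_
  ring

theorem HasDerivAt.tendsto_sub_div_pow {f : 𝕜 → 𝕜} {f' q : 𝕜} (hf : HasDerivAt f f' 0)
    (hq₀ : q ≠ 0) (hq : ‖q‖ < 1) (c : 𝕜) :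
    Tendsto (fun N : ℕ => (f (c * q ^ N) - f 0) / q ^ N) atTop (𝓝 (f' * c)) := by
  refine hf.tendsto_sub_div ?_ (tendsto_const_nhds.congr fun N => ?_)
  · simpa using (tendsto_pow_atTop_nhds_zero_of_norm_lt_one hq).const_mul c
  · field_simp [pow_ne_zero N hq₀]; ring

end SequentialDerivative

namespace PowerSeries

variable {𝕜 : Type*} [NontriviallyNormedField 𝕜]

def HasCoeffDerivAt (φ : 𝕜 → 𝕜⟦X⟧) (ψ : 𝕜⟦X⟧) (x : 𝕜) : Prop :=
  ∀ n, HasDerivAt (fun z => coeff n (φ z)) (coeff n ψ) x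

variable {φ χ : 𝕜 → 𝕜⟦X⟧} {ψ ω : 𝕜⟦X⟧} {x : 𝕜}

theorem hasCoeffDerivAt_const (c : 𝕜⟦X⟧) (x : 𝕜) : HasCoeffDerivAt (fun _ => c) 0 x :=
  fun n => by simpa using hasDerivAt_const x (coeff n c)

theorem HasCoeffDerivAt.sub_const (hφ : HasCoeffDerivAt φ ψ x) (c : 𝕜⟦X⟧) :
    HasCoeffDerivAt (fun z => φ z - c) ψ x :=
  fun n => by simpa using (hφ n).sub_const (coeff n c)

theorem HasCoeffDerivAt.mul (hφ : HasCoeffDerivAt φ ψ x) (hχ : HasCoeffDerivAt χ ω x) :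
    HasCoeffDerivAt (fun z => φ z * χ z) (ψ * χ x + φ x * ω) x := fun n => by
  simp only [coeff_mul, map_add, ← Finset.sum_add_distrib]
  exact HasDerivAt.fun_sum fun ab _ => (hφ ab.1).mul (hχ ab.2)

theorem HasCoeffDerivAt.mul_const (hφ : HasCoeffDerivAt φ ψ x) (c : 𝕜⟦X⟧) :
    HasCoeffDerivAt (fun z => φ z * c) (ψ * c) x := by
  simpa using hφ.mul (hasCoeffDerivAt_const c x)

theorem HasCoeffDerivAt.const_mul (c : 𝕜⟦X⟧) (hφ : HasCoeffDerivAt φ ψ x) :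
    HasCoeffDerivAt (fun z => c * φ z) (c * ψ) x := by
  simpa using (hasCoeffDerivAt_const c x).mul hφ

theorem HasCoeffDerivAt.pow (hφ : HasCoeffDerivAt φ ψ x) (k : ℕ) :
    HasCoeffDerivAt (fun z => φ z ^ k) (k * φ x ^ (k - 1) * ψ) x := by
  induction k with
  | zero => simpa using hasCoeffDerivAt_const 1 x
  | succ k ih =>
    have hderiv :
        ((k + 1 : ℕ) : 𝕜⟦X⟧) * φ x ^ k * ψ = k * φ x ^ (k - 1) * ψ * φ x + φ x ^ k * ψ := by
      rcases k with _ | k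
      · simp
      · simp only [Nat.add_sub_cancel, pow_succ]
        push_cast
        ring
    simpa only [pow_succ, Nat.add_sub_cancel, hderiv] using ih.mul hφ

theorem HasCoeffDerivAt.smul {c : 𝕜 → 𝕜} {c' : 𝕜} (hc : HasDerivAt c c' x)
    (hφ : HasCoeffDerivAt φ ψ x) :
    HasCoeffDerivAt (fun z => c z • φ z) (c' • φ x + c x • ψ) x :=
  fun n => by simpa using hc.fun_mul (hφ n)

theorem HasCoeffDerivAt.comp_of_eq {g : 𝕜 → 𝕜} {g' y : 𝕜} (hφ : HasCoeffDerivAt φ ψ y)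
    (hg : HasDerivAt g g' x) (hy : y = g x) : HasCoeffDerivAt (fun z => φ (g z)) (g' • ψ) x :=
  fun n => by simpa [Function.comp_def, mul_comm] using (hφ n).comp_of_eq x hg hy

end PowerSeries

namespace Padic

variable {p : ℕ} [Fact p.Prime]

open Nat in
theorem norm_inv_factorial_le (n : ℕ) : ‖((n ! : ℕ) : ℚ_[p])⁻¹‖ ≤ (p : ℝ) ^ n := by
  have hp : (1 : ℝ) ≤ p := mod_cast (Fact.out : p.Prime).one_lt.le
  rw [norm_inv, norm_eq_zpow_neg_valuation (mod_cast n.factorial_ne_zero), valuation_natCast,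
    ← zpow_neg, neg_neg, zpow_natCast]
  exact pow_le_pow_right₀ hp (padicValNat_factorial_le p n)

theorem expSeries_radius_pos : 0 < (NormedSpace.expSeries ℚ_[p] ℚ_[p]).radius := by
  have hp : (0 : ℝ) < p := mod_cast (Fact.out : p.Prime).pos
  refine lt_of_lt_of_le ?_ ((NormedSpace.expSeries ℚ_[p] ℚ_[p]).le_radius_of_bound 1
    (r := (p : NNReal)⁻¹) fun n => ?_)
  · simp [(Fact.out : p.Prime).ne_zero]
  · have hterm : ‖NormedSpace.expSeries ℚ_[p] ℚ_[p] n‖ ≤ (p : ℝ) ^ n := by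
      rw [NormedSpace.expSeries_eq_ofScalars, FormalMultilinearSeries.ofScalars_norm]
      exact norm_inv_factorial_le n
    calc ‖NormedSpace.expSeries ℚ_[p] ℚ_[p] n‖ * ((p : NNReal)⁻¹ : NNReal) ^ n
        ≤ (p : ℝ) ^ n * ((p : ℝ)⁻¹) ^ n := by push_cast; gcongr
      _ = 1 := by rw [← mul_pow, mul_inv_cancel₀ hp.ne', one_pow]

theorem hasDerivAt_exp_zero : HasDerivAt NormedSpace.exp (1 : ℚ_[p]) 0 :=
  hasDerivAt_exp_zero_of_radius_pos expSeries_radius_pos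

end Padic

section BinomialSeries

open Nat

variable {p : ℕ} [Fact p.Prime]

theorem binomSeries_eq_binomialSeries (z : ℚ_[p]) :
    binomSeries p z = PowerSeries.binomialSeries ℚ_[p] z := by
  ext n
  rw [binomSeries, coeff_mk, binomialSeries_coeff, smul_eq_mul, mul_one, Ring.choose_eq_smul,
    smul_eq_mul, ← Polynomial.aeval_eq_smeval, Polynomial.aeval_def, Polynomial.eval₂_eq_eval_map,
    descPochhammer_map, descPochhammer_eval_eq_prod_range, div_eq_inv_mul]

theorem binomSeries_add (z w : ℚ_[p]) :
    binomSeries p (z + w) = binomSeries p z * binomSeries p w := by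
  simp only [binomSeries_eq_binomialSeries, binomialSeries_add]

theorem binomSeries_natCast (d : ℕ) : binomSeries p d = (1 + X) ^ d := by
  rw [binomSeries_eq_binomialSeries, binomialSeries_nat]

theorem binomSeries_zero : binomSeries p 0 = 1 := by
  simpa using binomSeries_natCast (p := p) 0

theorem hasCoeffDerivAt_binomSeries_zero : HasCoeffDerivAt (binomSeries p) (log1p p) 0 := by
  rintro (_ | k)
  · simpa [binomSeries, log1p] using hasDerivAt_const (0 : ℚ_[p]) (1 : ℚ_[p])
  · have hprod : ∀ z : ℚ_[p], ∏ t ∈ Finset.range (k + 1), (z - t) =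
        z * ∏ t ∈ Finset.range k, (z - (t + 1)) := fun z => by
      rw [Finset.prod_range_succ', mul_comm]; push_cast; simp
    have hg : DifferentiableAt ℚ_[p] (fun z : ℚ_[p] => ∏ t ∈ Finset.range k, (z - (t + 1))) 0 := by
      fun_prop
    have hval : ∏ t ∈ Finset.range k, ((0 : ℚ_[p]) - (t + 1)) = (-1) ^ k * (k ! : ℚ_[p]) := by
      simp only [zero_sub, Finset.prod_neg, Finset.card_range]
      rw [← Finset.prod_range_add_one_eq_factorial]
      push_cast; rfl
    have hquot := ((hasDerivAt_id' (x := (0 : ℚ_[p]))).fun_mul hg.hasDerivAt).div_const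
      (((k + 1)! : ℕ) : ℚ_[p])
    simp only [binomSeries, log1p, coeff_mk, hprod]
    refine hquot.congr_deriv ?_
    rw [if_neg k.succ_ne_zero]
    simp only [one_mul, zero_mul, add_zero, hval, factorial_succ]
    have hk : (k ! : ℚ_[p]) ≠ 0 := Nat.cast_ne_zero.2 k.factorial_ne_zero
    push_cast
    field_simp
    ring

theorem hasCoeffDerivAt_binomSeries (z₀ : ℚ_[p]) :
    HasCoeffDerivAt (binomSeries p) (binomSeries p z₀ * log1p p) z₀ := by
  have hshift := hasCoeffDerivAt_binomSeries_zero.comp_of_eq ((hasDerivAt_id' z₀).sub_const z₀)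
    (sub_self z₀).symm
  rw [one_smul] at hshift
  simpa [← binomSeries_add] using hshift.const_mul (binomSeries p z₀)

end BinomialSeries

theorem statement14_general (p : ℕ) [Fact p.Prime] (m j i : ℕ) :
    (∀ n : ℕ,
      Tendsto (fun N : ℕ =>
          (PowerSeries.coeff (R := ℚ_[p]) n)
              ((1 + X) ^ (p ^ (m + N)) * X ^ i - X ^ i) / (p : ℚ_[p]) ^ N)
        atTop
        (nhds ((PowerSeries.coeff (R := ℚ_[p]) n) (((p : ℚ_[p]) ^ m) • (X ^ i * log1p p))))) ∧
    (∀ n : ℕ,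
      Tendsto (fun N : ℕ =>
          (PowerSeries.coeff (R := ℚ_[p]) n)
              ((NormedSpace.exp (-((j : ℚ_[p]) * (p : ℚ_[p]) ^ (m + N)))) •
                  (binomSeries p (NormedSpace.exp ((p : ℚ_[p]) ^ (m + N))) - 1) ^ i
                - X ^ i) / (p : ℚ_[p]) ^ N)
        atTop
        (nhds ((PowerSeries.coeff (R := ℚ_[p]) n)
          (((p : ℚ_[p]) ^ m) •
            ((i : ℚ_[p]) • ((1 + X) * X ^ (i - 1) * log1p p) - (j : ℚ_[p]) • X ^ i))))) := by
  have hp : (p : ℚ_[p]) ≠ 0 := Nat.cast_ne_zero.2 (Fact.out : p.Prime).ne_zero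
  have hpow : ∀ N, (p : ℚ_[p]) ^ (m + N) = (p : ℚ_[p]) ^ m * (p : ℚ_[p]) ^ N := fun N => pow_add ..
  have hbinom_one : binomSeries p 1 = 1 + X := by simpa using binomSeries_natCast (p := p) 1
  constructor
  · intro n
    have hderiv := (hasCoeffDerivAt_binomSeries_zero (p := p)).mul_const (X ^ i) n
    convert hderiv.tendsto_sub_div_pow hp Padic.norm_p_lt_one ((p : ℚ_[p]) ^ m) using 2 with N
    · have hnat : binomSeries p ((p : ℚ_[p]) ^ (m + N)) = (1 + X) ^ p ^ (m + N) := by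
        exact_mod_cast binomSeries_natCast (p ^ (m + N))
      simp [← hpow, hnat, binomSeries_zero]
    · simp [mul_comm]
  · intro n
    have hscale : HasDerivAt (fun x : ℚ_[p] => NormedSpace.exp (-(j * x))) (-j) 0 := by
      simpa [Function.comp_def] using Padic.hasDerivAt_exp_zero.comp_of_eq 0
        ((hasDerivAt_id' 0).const_mul (j : ℚ_[p])).neg (by simp)
    have hderiv := HasCoeffDerivAt.smul hscale ((((hasCoeffDerivAt_binomSeries 1).comp_of_eq
      Padic.hasDerivAt_exp_zero NormedSpace.exp_zero.symm).sub_const 1).pow i) n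
    convert hderiv.tendsto_sub_div_pow hp Padic.norm_p_lt_one ((p : ℚ_[p]) ^ m) using 2 with N
    · simp [hpow, hbinom_one]
    · rw [map_smul, smul_eq_mul, mul_comm, NormedSpace.exp_zero, mul_zero, neg_zero,
        NormedSpace.exp_zero, hbinom_one, add_sub_cancel_left, one_smul, one_smul,
        Nat.cast_smul_eq_nsmul, nsmul_eq_mul, neg_smul]
      congr 2
      ring

theorem statement14 (p : ℕ) [Fact p.Prime] (m j i : ℕ) (hm : 1 ≤ m) (hj : 1 ≤ j) :
    (∀ n : ℕ,
      Tendsto (fun N : ℕ =>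
          (PowerSeries.coeff (R := ℚ_[p]) n)
              ((1 + X) ^ (p ^ (m + N)) * X ^ i - X ^ i) / (p : ℚ_[p]) ^ N)
        atTop
        (nhds ((PowerSeries.coeff (R := ℚ_[p]) n) (((p : ℚ_[p]) ^ m) • (X ^ i * log1p p))))) ∧
    (∀ n : ℕ,
      Tendsto (fun N : ℕ =>
          (PowerSeries.coeff (R := ℚ_[p]) n)
              ((NormedSpace.exp (-((j : ℚ_[p]) * (p : ℚ_[p]) ^ (m + N)))) •
                  (binomSeries p (NormedSpace.exp ((p : ℚ_[p]) ^ (m + N))) - 1) ^ i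
                - X ^ i) / (p : ℚ_[p]) ^ N)
        atTop
        (nhds ((PowerSeries.coeff (R := ℚ_[p]) n)
          (((p : ℚ_[p]) ^ m) •
            ((i : ℚ_[p]) • ((1 + X) * X ^ (i - 1) * log1p p) - (j : ℚ_[p]) • X ^ i))))) :=
  statement14_general p m j i
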